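/- Let A be a quantum algorithm taking pure-state inputs from a Hilbert space H that outputs a fixed string s* or Fail, and let δ ∈ (0,1). By Jordan's lemma applied to the projection Π = U†(|s*⟩⟨s*|)U (U the unitary part of A, acting with fixed ancilla |0⟩), there is an orthogonal decomposition H = S_{<δ} ⊕ S_{≥δ} such that: for every unit |ψ⟩ ∈ S_{<δ}, Pr[A(|ψ⟩) = s*] < δ, and for every unit |ψ⟩ ∈ S_{≥δ}, Pr[A(|ψ⟩) = s*] ≥ δ. -/
import Mathlib
open Matrix
noncomputable section

/-- The Euclidean norm-squared related data on `ℂ^ι`. -/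
def cinner {ι : Type*} [Fintype ι] (v w : ι → ℂ) : ℂ :=
  ∑ i, (starRingEnd ℂ) (v i) * w i

/-- The Euclidean norm on `ℂ^ι`. -/
def vnorm {ι : Type*} [Fintype ι] (v : ι → ℂ) : ℝ :=
  Real.sqrt (∑ i, Complex.normSq (v i))

/-- Appending the ancilla `|0⟩` (index `a0`): `ψ ↦ ψ ⊗ |a0⟩`. -/
def embAnc {d a : ℕ} (a0 : Fin a) (ψ : Fin d → ℂ) : Fin d × Fin a → ℂ :=
  fun p => if p.2 = a0 then ψ p.1 else 0

lemma cinner_eq_dot {ι : Type*} [Fintype ι] (v w : ι → ℂ) :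
    cinner v w = star v ⬝ᵥ w := by
  simp [cinner, dotProduct, Pi.star_apply, Complex.star_def]

lemma dot_self_eq {ι : Type*} [Fintype ι] (v : ι → ℂ) :
    star v ⬝ᵥ v = ((∑ i, Complex.normSq (v i) : ℝ) : ℂ) := by
  simp [dotProduct, Complex.normSq_eq_conj_mul_self, Complex.star_def]

lemma vnorm_sq_eq {ι : Type*} [Fintype ι] (v : ι → ℂ) :
    vnorm v ^ 2 = ∑ i, Complex.normSq (v i) := by
  rw [vnorm, Real.sq_sqrt]
  exact Finset.sum_nonneg fun i _ => Complex.normSq_nonneg _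

/-- Jordan-lemma decomposition w.r.t. an algorithm `A` with unitary part `U`
and outcome projection `Q` (onto outcome `s*`): with `Π = Uᴴ Q U` and
`Pr[A(ψ) = s*] = ‖Π(ψ⊗|0⟩)‖²`, the input space decomposes into orthogonal
subspaces `S_{<δ} ⊕ S_{≥δ}` such that every unit vector of `S_{<δ}` succeeds
with probability `< δ` and every unit vector of `S_{≥δ}` succeeds with
probability `≥ δ`. -/
theorem jordan_success_decomposition {d a : ℕ} (a0 : Fin a)
    (U : Matrix (Fin d × Fin a) (Fin d × Fin a) ℂ)
    (hU : U ∈ Matrix.unitaryGroup (Fin d × Fin a) ℂ)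
    (Q : Matrix (Fin d × Fin a) (Fin d × Fin a) ℂ)
    (hQh : Q.IsHermitian) (hQ2 : Q * Q = Q)
    (δ : ℝ) (hδ0 : 0 < δ) (hδ1 : δ < 1) :
    ∃ S1 S2 : Submodule ℂ (Fin d → ℂ),
      (∀ x ∈ S1, ∀ y ∈ S2, cinner x y = 0) ∧
      S1 ⊔ S2 = ⊤ ∧
      (∀ ψ ∈ S1, vnorm ψ = 1 →
        vnorm ((Uᴴ * Q * U).mulVec (embAnc a0 ψ)) ^ 2 < δ) ∧
      (∀ ψ ∈ S2, vnorm ψ = 1 →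
        δ ≤ vnorm ((Uᴴ * Q * U).mulVec (embAnc a0 ψ)) ^ 2) := by
  classical
  have hUs : Uᴴ * U = 1 := by rw [← Matrix.star_eq_conjTranspose]; exact hU.1
  have hUs' : U * Uᴴ = 1 := by rw [← Matrix.star_eq_conjTranspose]; exact hU.2
  set P : Matrix (Fin d × Fin a) (Fin d × Fin a) ℂ := Uᴴ * Q * U with hPdef
  have hPh : Pᴴ = P := by
    simp [hPdef, Matrix.conjTranspose_mul, hQh.eq, mul_assoc]
  have hP2 : P * P = P := by
    calc P * P = Uᴴ * Q * (U * Uᴴ) * Q * U := by simp [hPdef, mul_assoc]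
    _ = P := by rw [hUs']; simp only [mul_one]; rw [mul_assoc Uᴴ Q Q, hQ2]
  set M : Matrix (Fin d) (Fin d) ℂ := Matrix.of (fun i j => P (i, a0) (j, a0)) with hMdef
  have hMh : M.IsHermitian := by
    ext i j
    have h := congrFun (congrFun hPh (i, a0)) (j, a0)
    simpa [Matrix.conjTranspose_apply, hMdef] using h
  -- probability formula
  have prob : ∀ ψ : Fin d → ℂ,
      vnorm (P *ᵥ embAnc a0 ψ) ^ 2 = (star ψ ⬝ᵥ (M *ᵥ ψ)).re := by
    intro ψ
    have h1 : star (P *ᵥ embAnc a0 ψ) ⬝ᵥ (P *ᵥ embAnc a0 ψ)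
        = star (embAnc a0 ψ) ⬝ᵥ (P *ᵥ embAnc a0 ψ) := by
      rw [Matrix.star_mulVec, hPh, ← Matrix.dotProduct_mulVec,
        Matrix.mulVec_mulVec, hP2]
    have h2 : star (embAnc a0 ψ) ⬝ᵥ (P *ᵥ embAnc a0 ψ) = star ψ ⬝ᵥ (M *ᵥ ψ) := by
      simp only [dotProduct, Matrix.mulVec, embAnc, Fintype.sum_prod_type,
        Pi.star_apply, apply_ite (star : ℂ → ℂ), star_zero, ite_mul, zero_mul, mul_ite, mul_zero,
        Finset.sum_ite_eq', Finset.mem_univ, if_true, hMdef, Matrix.of_apply]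
    rw [vnorm_sq_eq, ← Complex.ofReal_re ((∑ i, Complex.normSq ((P *ᵥ embAnc a0 ψ) i) : ℝ)),
      ← dot_self_eq, h1, h2]
  -- spectral decomposition of M
  set V : Matrix (Fin d) (Fin d) ℂ := (hMh.eigenvectorUnitary : Matrix (Fin d) (Fin d) ℂ)
    with hVdef
  set lam : Fin d → ℝ := hMh.eigenvalues with hlamdef
  have hVV : Vᴴ * V = 1 := by
    rw [hVdef, ← Matrix.star_eq_conjTranspose]
    exact hMh.eigenvectorUnitary.2.1
  have hVV' : V * Vᴴ = 1 := by
    rw [hVdef, ← Matrix.star_eq_conjTranspose]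
    exact hMh.eigenvectorUnitary.2.2
  have hspec : M = V * Matrix.diagonal (fun i => (lam i : ℂ)) * Vᴴ := by
    have h := hMh.spectral_theorem
    rw [← Matrix.star_eq_conjTranspose, hVdef]
    exact h
  set c : (Fin d → ℂ) → (Fin d → ℂ) := fun ψ => Vᴴ *ᵥ ψ with hcdef
  set e : Fin d → (Fin d → ℂ) := fun i k => V k i with hedef
  -- Parseval
  have pars : ∀ x y : Fin d → ℂ, star (c x) ⬝ᵥ c y = star x ⬝ᵥ y := by
    intro x y
    rw [hcdef]
    simp only
    rw [Matrix.star_mulVec, Matrix.conjTranspose_conjTranspose,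
      ← Matrix.dotProduct_mulVec, Matrix.mulVec_mulVec, hVV', Matrix.one_mulVec]
  -- quadratic form value
  have quad : ∀ ψ : Fin d → ℂ,
      star ψ ⬝ᵥ (M *ᵥ ψ) = ((∑ i, lam i * Complex.normSq (c ψ i) : ℝ) : ℂ) := by
    intro ψ
    have hsV : star ψ ᵥ* V = star (c ψ) := by
      rw [hcdef]; simp only
      rw [Matrix.star_mulVec, Matrix.conjTranspose_conjTranspose]
    rw [hspec, Matrix.mul_assoc, ← Matrix.mulVec_mulVec, ← Matrix.mulVec_mulVec,
      Matrix.dotProduct_mulVec (star ψ) V, hsV]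
    show star (c ψ) ⬝ᵥ (Matrix.diagonal (fun i => (lam i : ℂ)) *ᵥ c ψ) = _
    simp only [dotProduct, Matrix.mulVec_diagonal, Complex.ofReal_sum,
      Complex.ofReal_mul, Pi.star_apply]
    refine Finset.sum_congr rfl fun i _ => ?_
    rw [Complex.star_def]
    rw [show (Complex.normSq (c ψ i) : ℂ) = (starRingEnd ℂ) (c ψ i) * c ψ i from
      Complex.normSq_eq_conj_mul_self ▸ rfl]
    ring
  -- norms of coordinates
  have nrm : ∀ ψ : Fin d → ℂ,
      (∑ i, Complex.normSq (c ψ i)) = ∑ i, Complex.normSq (ψ i) := by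
    intro ψ
    have h := pars ψ ψ
    rw [dot_self_eq, dot_self_eq] at h
    exact_mod_cast h
  -- coordinates of the eigenvectors
  have ccol : ∀ j i, c (e j) i = if i = j then 1 else 0 := by
    intro j i
    have h : c (e j) i = (Vᴴ * V) i j := by
      simp [hcdef, hedef, Matrix.mulVec, dotProduct, Matrix.mul_apply]
    rw [h, hVV, Matrix.one_apply]
  -- coordinate extraction is linear, vanishing outside supporting set
  have mem_zero : ∀ (T : Set (Fin d)) (ψ : Fin d → ℂ),
      ψ ∈ Submodule.span ℂ (e '' T) → ∀ i ∉ T, c ψ i = 0 := by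
    intro T ψ hψ i hi
    induction hψ using Submodule.span_induction with
    | mem x hx =>
      obtain ⟨j, hj, rfl⟩ := hx
      rw [ccol j i, if_neg]
      rintro rfl; exact hi hj
    | zero => simp [hcdef]
    | add x y hx hy ihx ihy =>
      rw [hcdef] at *
      simp only [Matrix.mulVec_add, Pi.add_apply] at *
      rw [ihx, ihy, add_zero]
    | smul a x hx ihx =>
      rw [hcdef] at *
      simp only [Matrix.mulVec_smul, Pi.smul_apply] at *
      rw [ihx, smul_zero]
  -- expansion of any vector
  have hexp : ∀ ψ : Fin d → ℂ, ψ = ∑ i, c ψ i • e i := by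
    intro ψ
    have hV : V *ᵥ (c ψ) = ψ := by
      rw [hcdef]; simp only
      rw [Matrix.mulVec_mulVec, hVV', Matrix.one_mulVec]
    funext k
    have h1 : (∑ i, c ψ i • e i) k = ∑ i, c ψ i * V k i := by
      simp [hedef, Finset.sum_apply]
    have h2 : ∀ w : Fin d → ℂ, (V *ᵥ w) k = ∑ x, w x * V k x := by
      intro w; simp [Matrix.mulVec, dotProduct, mul_comm]
    rw [h1]
    calc ψ k = (V *ᵥ c ψ) k := by rw [hV]
    _ = ∑ x, c ψ x * V k x := h2 (c ψ)
  -- the two subspaces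
  set T1 : Set (Fin d) := {i | lam i < δ} with hT1
  refine ⟨Submodule.span ℂ (e '' T1), Submodule.span ℂ (e '' T1ᶜ), ?_, ?_, ?_, ?_⟩
  · -- orthogonality
    intro x hx y hy
    rw [cinner_eq_dot, ← pars x y, dotProduct]
    refine Finset.sum_eq_zero fun i _ => ?_
    by_cases hiT : i ∈ T1
    · rw [mem_zero _ y hy i (by simpa using hiT), mul_zero]
    · rw [Pi.star_apply, mem_zero _ x hx i hiT, star_zero, zero_mul]
  · -- sup is top
    rw [eq_top_iff]
    intro ψ _
    rw [hexp ψ]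
    refine Submodule.sum_mem _ fun i _ => ?_
    by_cases hiT : i ∈ T1
    · exact Submodule.mem_sup_left (Submodule.smul_mem _ _
        (Submodule.subset_span ⟨i, hiT, rfl⟩))
    · exact Submodule.mem_sup_right (Submodule.smul_mem _ _
        (Submodule.subset_span ⟨i, hiT, rfl⟩))
  · -- small subspace
    intro ψ hψ hψ1
    have h1 : (∑ i, Complex.normSq (ψ i)) = 1 := by
      have := vnorm_sq_eq ψ
      rw [hψ1, one_pow] at this
      exact this.symm
    have hc1 : (∑ i, Complex.normSq (c ψ i)) = 1 := by rw [nrm ψ, h1]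
    rw [prob ψ, quad ψ, Complex.ofReal_re]
    set n : Fin d → ℝ := fun i => Complex.normSq (c ψ i) with hn
    have hn0 : ∀ i, 0 ≤ n i := fun i => Complex.normSq_nonneg _
    set s : Finset (Fin d) := Finset.univ.filter (fun i => n i ≠ 0) with hs
    have hsum1 : ∑ i ∈ s, n i = 1 := by
      rw [hs, Finset.sum_filter_of_ne (fun x _ h => h), hc1]
    have hsne : s.Nonempty := by
      by_contra h
      rw [Finset.not_nonempty_iff_eq_empty] at h
      rw [h, Finset.sum_empty] at hsum1
      norm_num at hsum1
    have hrestrict : ∑ i, lam i * n i = ∑ i ∈ s, lam i * n i := by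
      rw [hs, Finset.sum_filter_of_ne]
      intro x _ h hx
      exact h (by rw [hx, mul_zero])
    have hlt : ∀ i ∈ s, lam i < δ := by
      intro i hi
      by_contra h
      have : i ∉ T1 := by simpa [hT1] using h
      have := mem_zero T1 ψ hψ i this
      rw [hs, Finset.mem_filter] at hi
      exact hi.2 (by rw [hn]; simp [this])
    calc ∑ i, lam i * n i = ∑ i ∈ s, lam i * n i := hrestrict
    _ < ∑ i ∈ s, δ * n i := by
        refine Finset.sum_lt_sum_of_nonempty hsne fun i hi => ?_
        have hni : 0 < n i := by
          rw [hs, Finset.mem_filter] at hi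
          exact lt_of_le_of_ne (hn0 i) (Ne.symm hi.2)
        exact mul_lt_mul_of_pos_right (hlt i hi) hni
    _ = δ := by rw [← Finset.mul_sum, hsum1, mul_one]
  · -- large subspace
    intro ψ hψ hψ1
    have h1 : (∑ i, Complex.normSq (ψ i)) = 1 := by
      have := vnorm_sq_eq ψ
      rw [hψ1, one_pow] at this
      exact this.symm
    have hc1 : (∑ i, Complex.normSq (c ψ i)) = 1 := by rw [nrm ψ, h1]
    rw [prob ψ, quad ψ, Complex.ofReal_re]
    set n : Fin d → ℝ := fun i => Complex.normSq (c ψ i) with hn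
    have hn0 : ∀ i, 0 ≤ n i := fun i => Complex.normSq_nonneg _
    set s : Finset (Fin d) := Finset.univ.filter (fun i => n i ≠ 0) with hs
    have hsum1 : ∑ i ∈ s, n i = 1 := by
      rw [hs, Finset.sum_filter_of_ne (fun x _ h => h), hc1]
    have hrestrict : ∑ i, lam i * n i = ∑ i ∈ s, lam i * n i := by
      rw [hs, Finset.sum_filter_of_ne]
      intro x _ h hx
      exact h (by rw [hx, mul_zero])
    have hge : ∀ i ∈ s, δ ≤ lam i := by
      intro i hi
      by_contra h
      have hiT : i ∉ T1ᶜ := by simp [hT1]; linarith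
      have := mem_zero T1ᶜ ψ hψ i hiT
      rw [hs, Finset.mem_filter] at hi
      exact hi.2 (by rw [hn]; simp [this])
    calc δ = ∑ i ∈ s, δ * n i := by rw [← Finset.mul_sum, hsum1, mul_one]
    _ ≤ ∑ i ∈ s, lam i * n i :=
        Finset.sum_le_sum fun i hi => mul_le_mul_of_nonneg_right (hge i hi) (hn0 i)
    _ = ∑ i, lam i * n i := hrestrict.symm

end
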